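/- arXiv:2001.03834 — 3 statements merged into one kernel-verified Lean document; each statement's English description precedes it below -/
import Mathlib

section
/- Let n ≥ 4 and let ζ = exp(πi/(2n−1)) ∈ ℂ. Then ∏_{j=2}^{n−1} [2j]_ζ = ∏_{j=3}^{n−1} [j]_ζ, i.e. [2n−2]_ζ [2n−4]_ζ ⋯ [4]_ζ = [n−1]_ζ [n−2]_ζ ⋯ [3]_ζ; equivalently, the quantum dimension of the half-spin representation V(Λ_{n−1}) of so(2n) at ζ equals 1. -/
open Complex

/-- `ζ = exp(πi/m)`, a primitive `2m`-th root of unity. -/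
noncomputable def zeta (m : ℕ) : ℂ := Complex.exp (Real.pi * Complex.I / m)

/-- The `ζ`-integer `[n]_ζ = (ζ^n - ζ^{-n})/(ζ - ζ⁻¹)` for `ζ = exp(πi/m)`. -/
noncomputable def qint (m : ℕ) (n : ℤ) : ℂ :=
  (zeta m ^ n - zeta m ^ (-n)) / (zeta m - (zeta m)⁻¹)

/-!
Since `ζ^m = -1`, the ζ-integers satisfy `[m - k] = [k]`. For odd `m = 2n - 1`, sending `j` to
`2j` when `2j < n` and to `m - 2j` otherwise permutes `{1, …, n-1}`, so
`∏_{j=1}^{n-1} [2j] = ∏_{k=1}^{n-1} [k]`; cancelling `[2] ≠ 0` and `[1] = 1` gives the claim.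
-/

lemma zeta_ne_zero (m : ℕ) : zeta m ≠ 0 := Complex.exp_ne_zero _

lemma zeta_pow_self {m : ℕ} (hm : m ≠ 0) : zeta m ^ m = -1 := by
  rw [zeta, ← Complex.exp_nat_mul, mul_div_cancel₀ _ (Nat.cast_ne_zero.2 hm)]
  exact Complex.exp_pi_mul_I

lemma isPrimitiveRoot_zeta {m : ℕ} (hm : m ≠ 0) : IsPrimitiveRoot (zeta m) (2 * m) := by
  rw [zeta]
  convert Complex.isPrimitiveRoot_exp (2 * m) (by omega) using 2
  push_cast
  field_simp

lemma zeta_pow_sub_zpow_neg_ne_zero {m k : ℕ} (hk0 : k ≠ 0) (hkm : k < m) :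
    zeta m ^ (k : ℤ) - zeta m ^ (-(k : ℤ)) ≠ 0 := by
  have hpow : zeta m ^ (2 * k) ≠ 1 :=
    (isPrimitiveRoot_zeta (by omega)).pow_ne_one_of_pos_of_lt (by omega) (by omega)
  intro h
  apply hpow
  rw [sub_eq_zero, zpow_neg, zpow_natCast] at h
  rwa [pow_mul', sq, mul_eq_one_iff_eq_inv₀ (pow_ne_zero _ (zeta_ne_zero m))]

lemma qint_ne_zero {m k : ℕ} (hk0 : k ≠ 0) (hkm : k < m) : qint m k ≠ 0 := by
  refine div_ne_zero (zeta_pow_sub_zpow_neg_ne_zero hk0 hkm) ?_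
  simpa using zeta_pow_sub_zpow_neg_ne_zero (m := m) one_ne_zero (by omega)

lemma qint_one {m : ℕ} (hm : 1 < m) : qint m 1 = 1 := by
  rw [qint, zpow_one, zpow_neg_one]
  refine div_self ?_
  simpa using zeta_pow_sub_zpow_neg_ne_zero (m := m) one_ne_zero hm

lemma qint_self_sub {m : ℕ} (hm : m ≠ 0) (k : ℤ) : qint m (m - k) = qint m k := by
  have hζ := zeta_ne_zero m
  have hpow : zeta m ^ (m : ℤ) = -1 := by rw [zpow_natCast, zeta_pow_self hm]
  unfold qint
  congr 1
  rw [neg_sub, zpow_sub₀ hζ, zpow_sub₀ hζ, hpow, zpow_neg]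
  field_simp
  ring

lemma prod_qint_two_mul_Icc (n : ℕ) :
    ∏ j ∈ Finset.Icc 1 (n - 1), qint (2 * n - 1) (2 * (j : ℤ)) =
      ∏ j ∈ Finset.Icc 1 (n - 1), qint (2 * n - 1) (j : ℤ) := by
  refine Finset.prod_nbij' (fun j ↦ if 2 * j ≤ n - 1 then 2 * j else 2 * n - 1 - 2 * j)
    (fun k ↦ if k % 2 = 0 then k / 2 else (2 * n - 1 - k) / 2) ?_ ?_ ?_ ?_ ?_
  all_goals simp only [Finset.mem_Icc]
  · intro j hj; split_ifs <;> omega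
  · intro k hk; split_ifs <;> omega
  · intro j hj; split_ifs <;> omega
  · intro k hk; split_ifs <;> omega
  · intro j hj
    split_ifs
    · push_cast; rfl
    · rw [← qint_self_sub (by omega)]
      congr 1
      push_cast [show 2 * j ≤ 2 * n - 1 by omega, show 1 ≤ 2 * n by omega]
      ring

theorem qdim_halfspin_D_general (n : ℕ) :
    ∏ j ∈ Finset.Icc 2 (n - 1), qint (2 * n - 1) (2 * (j : ℤ)) =
      ∏ j ∈ Finset.Icc 3 (n - 1), qint (2 * n - 1) (j : ℤ) := by
  rcases le_or_gt n 2 with hn | hn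
  · simp [Finset.Icc_eq_empty (show ¬ 2 ≤ n - 1 by omega),
      Finset.Icc_eq_empty (show ¬ 3 ≤ n - 1 by omega)]
  have peel (f : ℕ → ℂ) (a : ℕ) (ha : a ≤ n - 1) :
      ∏ j ∈ Finset.Icc a (n - 1), f j = f a * ∏ j ∈ Finset.Icc (a + 1) (n - 1), f j := by
    rw [← Finset.insert_Icc_add_one_left_eq_Icc ha, Finset.prod_insert (by simp)]
  have h := prod_qint_two_mul_Icc n
  rw [peel (fun j ↦ qint _ (2 * (j : ℤ))) 1 (by omega),
    peel (fun j ↦ qint _ (j : ℤ)) 1 (by omega),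
    peel (fun j ↦ qint _ (j : ℤ)) 2 (by omega)] at h
  simp only [Nat.cast_one, Nat.cast_ofNat, mul_one, one_mul,
    qint_one (show 1 < 2 * n - 1 by omega)] at h
  exact mul_left_cancel₀ (qint_ne_zero (k := 2) (by omega) (by omega)) h

theorem qdim_halfspin_D (n : ℕ) (hn : 4 ≤ n) :
    ∏ j ∈ Finset.Icc 2 (n - 1), qint (2 * n - 1) (2 * (j : ℤ)) =
      ∏ j ∈ Finset.Icc 3 (n - 1), qint (2 * n - 1) (j : ℤ) :=
  qdim_halfspin_D_general n
end

section
/- Let ζ = exp(πi/19) ∈ ℂ. Then [12]_ζ [13]_ζ [14]_ζ [15]_ζ [18]_ζ [21]_ζ = −[1]_ζ [2]_ζ [4]_ζ [5]_ζ [6]_ζ [7]_ζ; equivalently, the quantum dimension of the representation V(2Λ_1) of the simple Lie algebra of type E₇ at ζ, namely ([12]_ζ [13]_ζ [14]_ζ [15]_ζ [18]_ζ [21]_ζ)/([1]_ζ [2]_ζ [4]_ζ [5]_ζ [6]_ζ [7]_ζ), equals −1. -/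
open Complex

lemma zeta_zpow_self {m : ℕ} (hm : m ≠ 0) : zeta m ^ (m : ℤ) = -1 := by
  rw [zpow_natCast, zeta, ← Complex.exp_nat_mul,
    mul_div_cancel₀ _ (Nat.cast_ne_zero.mpr hm), Complex.exp_pi_mul_I]

lemma qint_neg (m : ℕ) (n : ℤ) : qint m (-n) = -qint m n := by
  rw [qint, qint, neg_neg, ← neg_div, neg_sub]

lemma qint_add_self (m : ℕ) (n : ℤ) : qint m (n + m) = -qint m n := by
  rcases eq_or_ne m 0 with rfl | hm
  · simp [qint, zeta]
  have hz := zeta_ne_zero m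
  have h₁ : zeta m ^ (n + m) = -zeta m ^ n := by
    rw [zpow_add₀ hz, zeta_zpow_self hm, mul_neg_one]
  have h₂ : zeta m ^ (-(n + m)) = -zeta m ^ (-n) := by
    rw [neg_add, zpow_add₀ hz, zpow_neg _ (m : ℤ), zeta_zpow_self hm, inv_neg, inv_one,
      mul_neg_one]
  rw [qint, qint, h₁, h₂, neg_sub_neg, ← neg_sub, neg_div]

lemma qint_eq_of_add_eq {m : ℕ} {a b : ℤ} (h : a + b = m) : qint m a = qint m b := by
  rw [← neg_neg (qint m b), ← qint_neg, ← qint_add_self, ← h]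
  congr 1
  ring

lemma zeta_zpow_sub_zpow_neg_ne_zero {m : ℕ} (hm : m ≠ 0) {n : ℤ} (hn : ¬(m : ℤ) ∣ n) :
    zeta m ^ n - zeta m ^ (-n) ≠ 0 := by
  intro h
  have hsq : zeta m ^ (2 * n) = 1 := by
    rw [show 2 * n = n - -n by ring, zpow_sub₀ (zeta_ne_zero m), sub_eq_zero.mp h,
      div_self (zpow_ne_zero _ (zeta_ne_zero m))]
  rw [(isPrimitiveRoot_zeta hm).zpow_eq_one_iff_dvd, Nat.cast_mul, Nat.cast_ofNat] at hsq
  exact hn (Int.dvd_of_mul_dvd_mul_left two_ne_zero hsq)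

lemma qint_ne_zero_s10 {m : ℕ} (hm : m ≠ 0) {n : ℤ} (hn : ¬(m : ℤ) ∣ n) : qint m n ≠ 0 := by
  have h₁ : ¬(m : ℤ) ∣ 1 := fun h ↦ hn (h.trans (one_dvd n))
  refine div_ne_zero (zeta_zpow_sub_zpow_neg_ne_zero hm hn) ?_
  simpa using zeta_zpow_sub_zpow_neg_ne_zero hm h₁

theorem qdim_E7_twoLambda1 :
    qint 19 12 * qint 19 13 * qint 19 14 * qint 19 15 * qint 19 18 * qint 19 21 =
        -(qint 19 1 * qint 19 2 * qint 19 4 * qint 19 5 * qint 19 6 * qint 19 7) ∧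
      qint 19 12 * qint 19 13 * qint 19 14 * qint 19 15 * qint 19 18 * qint 19 21 /
        (qint 19 1 * qint 19 2 * qint 19 4 * qint 19 5 * qint 19 6 * qint 19 7) = -1 := by
  have h12 : qint 19 12 = qint 19 7 := qint_eq_of_add_eq (by norm_num)
  have h13 : qint 19 13 = qint 19 6 := qint_eq_of_add_eq (by norm_num)
  have h14 : qint 19 14 = qint 19 5 := qint_eq_of_add_eq (by norm_num)
  have h15 : qint 19 15 = qint 19 4 := qint_eq_of_add_eq (by norm_num)
  have h18 : qint 19 18 = qint 19 1 := qint_eq_of_add_eq (by norm_num)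
  have h21 : qint 19 21 = -qint 19 2 := qint_add_self 19 2
  have hprod : qint 19 12 * qint 19 13 * qint 19 14 * qint 19 15 * qint 19 18 * qint 19 21 =
      -(qint 19 1 * qint 19 2 * qint 19 4 * qint 19 5 * qint 19 6 * qint 19 7) := by
    rw [h12, h13, h14, h15, h18, h21]
    ring
  have hden : qint 19 1 * qint 19 2 * qint 19 4 * qint 19 5 * qint 19 6 * qint 19 7 ≠ 0 := by
    simp only [ne_eq, mul_eq_zero, not_or]
    refine ⟨⟨⟨⟨⟨?_, ?_⟩, ?_⟩, ?_⟩, ?_⟩, ?_⟩ <;> exact qint_ne_zero_s10 (by norm_num) (by norm_num)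
  exact ⟨hprod, by rw [hprod, neg_div, div_self hden]⟩
end

section
/- Let ζ = exp(πi/19) ∈ ℂ. Then [12]_ζ [14]_ζ [15]_ζ [18]_ζ [20]_ζ = −[1]_ζ² [4]_ζ [5]_ζ [7]_ζ; equivalently, the quantum dimension of the representation V(Λ_1 + Λ_7) of the simple Lie algebra of type E₇ at ζ, namely ([12]_ζ [14]_ζ [15]_ζ [18]_ζ [20]_ζ)/([1]_ζ² [4]_ζ [5]_ζ [7]_ζ), equals −1. -/
open Complex

lemma zeta19_ne_zero : zeta 19 ≠ 0 := Complex.exp_ne_zero _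

lemma zeta19_zpow (n : ℤ) :
    zeta 19 ^ n = Complex.exp (n * (Real.pi * Complex.I / 19)) := by
  rw [zeta, ← Complex.exp_int_mul]
  norm_num

lemma zeta19_pow19 : zeta 19 ^ (19 : ℤ) = -1 := by
  rw [zeta19_zpow,
    show ((19 : ℤ) : ℂ) * (Real.pi * Complex.I / 19) = Real.pi * Complex.I by push_cast; ring]
  exact Complex.exp_pi_mul_I

lemma zeta19_flip (a b : ℤ) (h : a + b = 19) :
    zeta 19 ^ a - zeta 19 ^ (-a) = zeta 19 ^ b - zeta 19 ^ (-b) := by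
  have ha : a = 19 + -b := by omega
  subst ha
  have h0 := zeta19_ne_zero
  simp only [neg_add, neg_neg, zpow_add₀ h0, zpow_neg, zeta19_pow19]
  ring

lemma zeta19_shift (a b : ℤ) (h : a = 19 + b) :
    zeta 19 ^ a - zeta 19 ^ (-a) = -(zeta 19 ^ b - zeta 19 ^ (-b)) := by
  subst h
  have h0 := zeta19_ne_zero
  simp only [neg_add, neg_neg, zpow_add₀ h0, zpow_neg, zeta19_pow19]
  ring

lemma zeta19_prim : IsPrimitiveRoot (zeta 19) 38 := by
  have h : zeta 19 = Complex.exp (2 * Real.pi * Complex.I / (38 : ℕ)) := by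
    rw [zeta]
    push_cast
    ring_nf
  rw [h]
  exact Complex.isPrimitiveRoot_exp 38 (by norm_num)

lemma zeta19_num_ne (n : ℤ) (h : ¬ ((38 : ℤ) ∣ 2 * n)) :
    zeta 19 ^ n - zeta 19 ^ (-n) ≠ 0 := by
  intro hz
  apply h
  have h0 := zeta19_ne_zero
  have heq : zeta 19 ^ n = zeta 19 ^ (-n) := sub_eq_zero.mp hz
  have h1 : zeta 19 ^ (2 * n) = 1 := by
    rw [two_mul, zpow_add₀ h0]
    nth_rewrite 2 [heq]
    rw [← zpow_add₀ h0]
    norm_num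
  have := (zeta19_prim.zpow_eq_one_iff_dvd (2 * n)).mp h1
  exact_mod_cast this

theorem qdim_E7_Lambda1_Lambda7 :
    qint 19 12 * qint 19 14 * qint 19 15 * qint 19 18 * qint 19 20 =
        -(qint 19 1 ^ 2 * qint 19 4 * qint 19 5 * qint 19 7) ∧
      qint 19 12 * qint 19 14 * qint 19 15 * qint 19 18 * qint 19 20 /
        (qint 19 1 ^ 2 * qint 19 4 * qint 19 5 * qint 19 7) = -1 := by
  have e12 : qint 19 12 = qint 19 7 := by unfold qint; rw [zeta19_flip 12 7 (by norm_num)]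
  have e14 : qint 19 14 = qint 19 5 := by unfold qint; rw [zeta19_flip 14 5 (by norm_num)]
  have e15 : qint 19 15 = qint 19 4 := by unfold qint; rw [zeta19_flip 15 4 (by norm_num)]
  have e18 : qint 19 18 = qint 19 1 := by unfold qint; rw [zeta19_flip 18 1 (by norm_num)]
  have e20 : qint 19 20 = -qint 19 1 := by
    unfold qint; rw [zeta19_shift 20 1 (by norm_num), neg_div]
  have hden : zeta 19 - (zeta 19)⁻¹ ≠ 0 := by
    have := zeta19_num_ne 1 (by decide)
    simpa using this
  have hq : ∀ n : ℤ, ¬ ((38 : ℤ) ∣ 2 * n) → qint 19 n ≠ 0 := fun n hn =>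
    div_ne_zero (zeta19_num_ne n hn) hden
  have h1 : qint 19 1 ≠ 0 := hq 1 (by decide)
  have h4 : qint 19 4 ≠ 0 := hq 4 (by decide)
  have h5 : qint 19 5 ≠ 0 := hq 5 (by decide)
  have h7 : qint 19 7 ≠ 0 := hq 7 (by decide)
  have hne : qint 19 1 ^ 2 * qint 19 4 * qint 19 5 * qint 19 7 ≠ 0 :=
    mul_ne_zero (mul_ne_zero (mul_ne_zero (pow_ne_zero 2 h1) h4) h5) h7
  constructor
  · rw [e12, e14, e15, e18, e20]; ring
  · rw [e12, e14, e15, e18, e20, div_eq_iff hne]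
    ring
end
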